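/- arXiv:1810.03448 — 2 statements merged into one kernel-verified Lean document; each statement's English description precedes it below -/
import Mathlib

section
/- Let K be a field of characteristic zero, let E be a K-vector space of dimension d with basis e_1,…,e_d, and let λ be a partition with at most d parts. If v ∈ ∇^λ(E) satisfies X^{(c)}·v = 0 for all c ∈ {2,…,d}, then v is a scalar multiple of F(t^λ), where t^λ is the λ-tableau with every entry in row i equal to i. -/
open scoped Classical

namespace Pleth

/-- A finitely supported function `f : ℕ → ℕ` is a partition when its values are weakly
decreasing.  Parts are indexed from `0`, so `f i` is the `(i+1)`-st part `λ_{i+1}`;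
parts beyond the length of the partition are `0`. -/
def IsPartition (f : ℕ →₀ ℕ) : Prop := ∀ i j : ℕ, i ≤ j → f j ≤ f i

/-- `f` is a partition of `n`. -/
def IsPartitionOf (f : ℕ →₀ ℕ) (n : ℕ) : Prop := IsPartition f ∧ f.sum (fun _ k => k) = n

/-- The multiset of (nonzero) parts of `f`. -/
def partsOf (f : ℕ →₀ ℕ) : Multiset ℕ := f.support.val.map f

/-- The rectangular partition `(v^r)` with `r` parts equal to `v`. -/
noncomputable def rect (r v : ℕ) : ℕ →₀ ℕ := (Finset.range r).sum fun i => Finsupp.single i v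

/-- The dominance order on compositions:  `Dominates α β` means `α ⊵ β`. -/
def Dominates (α β : ℕ →₀ ℕ) : Prop :=
  ∀ k : ℕ, ∑ i ∈ Finset.range k, β i ≤ ∑ i ∈ Finset.range k, α i

/-- The Young diagram of a (finitely supported) shape, with rows and columns indexed
from `0`: the cell `(i, j)` lies in row `i` and column `j`. -/
def cells (lam : ℕ →₀ ℕ) : Finset (ℕ × ℕ) :=
  (lam.support ×ˢ Finset.range (lam.support.sup lam)).filter fun p => p.2 < lam p.1

lemma mem_cells {lam : ℕ →₀ ℕ} {p : ℕ × ℕ} : p ∈ cells lam ↔ p.2 < lam p.1 := by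
  constructor
  · exact fun h => (Finset.mem_filter.mp h).2
  · intro h
    exact Finset.mem_filter.mpr ⟨Finset.mem_product.mpr
      ⟨Finsupp.mem_support_iff.mpr (by omega),
       Finset.mem_range.mpr (lt_of_lt_of_le h (Finset.le_sup (Finsupp.mem_support_iff.mpr (by omega))))⟩, h⟩

/-- The type of cells of the Young diagram of `lam`. -/
abbrev Cell (lam : ℕ →₀ ℕ) : Type := {p : ℕ × ℕ // p ∈ cells lam}

/-- A `lam`-tableau with entries in `B` is a function from the Young diagram of `lam` to `B`. -/
abbrev Tab (lam : ℕ →₀ ℕ) (B : Type*) : Type _ := Cell lam → B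

/-- The rows of `t` are weakly increasing with respect to the relation `le`. -/
def RowsWeak (lam : ℕ →₀ ℕ) {B : Type*} (le : B → B → Prop) (t : Tab lam B) : Prop :=
  ∀ p q : Cell lam, p.1.1 = q.1.1 → p.1.2 ≤ q.1.2 → le (t p) (t q)

/-- The columns of `t` are strictly increasing with respect to the relation `lt`. -/
def ColsStrict (lam : ℕ →₀ ℕ) {B : Type*} (lt : B → B → Prop) (t : Tab lam B) : Prop :=
  ∀ p q : Cell lam, p.1.2 = q.1.2 → p.1.1 < q.1.1 → lt (t p) (t q)

/-- A semistandard tableau: rows weakly increasing, columns strictly increasing. -/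
def IsSemistd (lam : ℕ →₀ ℕ) {B : Type*} [LinearOrder B] (t : Tab lam B) : Prop :=
  RowsWeak lam (· ≤ ·) t ∧ ColsStrict lam (· < ·) t

/-- The semistandard `lam`-tableaux with entries in `B`. -/
abbrev SSYT (lam : ℕ →₀ ℕ) (B : Type*) [LinearOrder B] : Type _ :=
  {t : Tab lam B // IsSemistd lam t}

/-- The coefficient of the monomial `x^α = x_0^{α 0} x_1^{α 1} ⋯` in the Schur function
`s_lam`, namely the number of semistandard `lam`-tableaux with entries in `ℕ`
(the entry `b` corresponding to the variable `x_b`) having exactly `α b` entries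
equal to `b` for every `b`. -/
noncomputable def schurCoeff (lam α : ℕ →₀ ℕ) : ℕ :=
  Nat.card {t : Tab lam ℕ // IsSemistd lam t ∧
    ∀ b : ℕ, α b = (Finset.univ.filter (fun p : Cell lam => t p = b)).card}

/-- The set of entries of column `j` of the tableau `t`. -/
noncomputable def colSet (lam : ℕ →₀ ℕ) {B : Type*} [LinearOrder B] (t : Tab lam B) (j : ℕ) :
    Finset B :=
  (Finset.univ.filter (fun p : Cell lam => p.1.2 = j)).image t

/-- The total order on (column-standard) tableaux:  `t < u` if and only if, in the rightmost
column in which `t` and `u` differ, the greatest entry not appearing in both columns lies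
in `u`. -/
def tabLT (lam : ℕ →₀ ℕ) {B : Type*} [LinearOrder B] (t u : Tab lam B) : Prop :=
  ∃ j : ℕ, colSet lam t j ≠ colSet lam u j ∧
    (∀ j' : ℕ, j < j' → colSet lam t j' = colSet lam u j') ∧
    ∃ m : B, m ∈ colSet lam u j ∧ m ∉ colSet lam t j ∧
      ∀ x : B, ((x ∈ colSet lam t j ∧ x ∉ colSet lam u j) ∨
                (x ∈ colSet lam u j ∧ x ∉ colSet lam t j)) → x ≤ m

def tabLE (lam : ℕ →₀ ℕ) {B : Type*} [LinearOrder B] (t u : Tab lam B) : Prop :=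
  t = u ∨ tabLT lam t u

/-- A plethystic semistandard tableau of shape `mu^nu`: a `nu`-tableau whose entries are
semistandard `mu`-tableaux, with rows weakly increasing and columns strictly increasing
with respect to the total order `tabLT` on semistandard `mu`-tableaux. -/
def IsPSSYT (mu nu : ℕ →₀ ℕ) {B : Type*} [LinearOrder B] (T : Tab nu (SSYT mu B)) : Prop :=
  RowsWeak nu (fun s s' => tabLE mu s.1 s'.1) T ∧
  ColsStrict nu (fun s s' => tabLT mu s.1 s'.1) T

/-- `T` has weight `α`: for every letter `b`, the total number of entries equal to `b`
among the `mu`-tableau entries of `T` is `α b`. -/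
def HasWeight (mu nu : ℕ →₀ ℕ) {B : Type*} [LinearOrder B] (T : Tab nu (SSYT mu B))
    (α : B → ℕ) : Prop :=
  ∀ b : B, α b = ∑ P : Cell nu,
    (Finset.univ.filter (fun p : Cell mu => (T P).1 p = b)).card

/-- The coefficient of the monomial `x^α` in the plethysm `s_nu ∘ s_mu`, namely the number
of plethystic semistandard tableaux of shape `mu^nu` and weight `α`. -/
noncomputable def plethCoeff (nu mu α : ℕ →₀ ℕ) : ℕ :=
  Nat.card {T : Tab nu (SSYT mu ℕ) // IsPSSYT mu nu T ∧ HasWeight mu nu T (fun b => α b)}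

end Pleth

namespace Pleth

/-- The canonical index type for the basis of `Sym^lam V`, where `V` is free with basis `B`:
one multiset of entries (of the right size) for each row of the Young diagram. -/
abbrev RowData (lam : ℕ →₀ ℕ) (B : Type*) : Type _ := (i : ℕ) → Sym B (lam i)

/-- A concrete model for `Sym^lam V = ⊗_i Sym^{lam_i} V`, where `V` is the free `K`-module
with basis `{v_b : b ∈ B}`:  the free `K`-module on the GL-tabloids, i.e. on `RowData lam B`. -/
abbrev SymMod (lam : ℕ →₀ ℕ) (B : Type*) (K : Type*) [Semiring K] : Type _ :=
  RowData lam B →₀ K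

/-- The multisets of row entries of a tableau. -/
def rowData (lam : ℕ →₀ ℕ) {B : Type*} (t : Tab lam B) : RowData lam B := fun i =>
  ⟨(Finset.range (lam i)).attach.val.map
      (fun j => t ⟨(i, j.1), mem_cells.mpr (Finset.mem_range.mp j.2)⟩), by rw [Multiset.card_map, ← Finset.card_def, Finset.card_attach, Finset.card_range]⟩

/-- The GL-tabloid `f(t) = ⊗_i ∏_j v_{t(i,j)} ∈ Sym^lam V`. -/
noncomputable def tabloid (K : Type*) [CommRing K] (lam : ℕ →₀ ℕ) {B : Type*}
    (t : Tab lam B) : SymMod lam B K :=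
  Finsupp.single (rowData lam t) 1

/-- The place-permutation action: `(t σ) (x) = t (σ⁻¹ x)`. -/
def permTab (lam : ℕ →₀ ℕ) {B : Type*} (t : Tab lam B) (σ : Equiv.Perm (Cell lam)) :
    Tab lam B := fun p => t (σ⁻¹ p)

/-- `σ` preserves each column of the Young diagram, i.e. `σ ∈ CPP(lam)`. -/
def ColPres (lam : ℕ →₀ ℕ) (σ : Equiv.Perm (Cell lam)) : Prop :=
  ∀ p : Cell lam, (σ p).1.2 = p.1.2

/-- The GL-polytabloid `F(t) = ∑_{σ ∈ CPP(lam)} sgn(σ) f(tσ)`. -/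
noncomputable def polytabloid (K : Type*) [CommRing K] (lam : ℕ →₀ ℕ) {B : Type*}
    (t : Tab lam B) : SymMod lam B K :=
  ∑ σ : Equiv.Perm (Cell lam),
    if ColPres lam σ then ((Equiv.Perm.sign σ : ℤ) • tabloid K lam (permTab lam t σ)) else 0

/-- `∇^lam (V)`: the `K`-submodule of `Sym^lam V` spanned by the GL-polytabloids. -/
noncomputable def nabla (K : Type*) [CommRing K] (lam : ℕ →₀ ℕ) (B : Type*) :
    Submodule K (SymMod lam B K) :=
  Submodule.span K (Set.range (fun t : Tab lam B => polytabloid K lam t))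

/-- The number of entries `≤ b` in row `i` of `t`; as a function of `i` this is the
composition `t^{≤ b}`. -/
noncomputable def rowCountLe (lam : ℕ →₀ ℕ) {B : Type*} [LinearOrder B] (t : Tab lam B)
    (b : B) (i : ℕ) : ℕ :=
  (Finset.univ.filter (fun p : Cell lam => p.1.1 = i ∧ t p ≤ b)).card

/-- The dominance order on (row-semistandard) tableaux of the same shape:
`t ⊵ u` iff `t^{≤b} ⊵ u^{≤b}` for every `b`. -/
def TabDom (lam : ℕ →₀ ℕ) {B : Type*} [LinearOrder B] (t u : Tab lam B) : Prop :=
  ∀ b : B, ∀ k : ℕ,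
    ∑ i ∈ Finset.range k, rowCountLe lam u b i ≤ ∑ i ∈ Finset.range k, rowCountLe lam t b i

/-- `t̄`: the tableau obtained from `t` by sorting each row into weakly increasing order. -/
noncomputable def rowsort (lam : ℕ →₀ ℕ) {B : Type*} [LinearOrder B] (t : Tab lam B) :
    Tab lam B :=
  fun p => (List.insertionSort (· ≤ ·) ((List.range (lam p.1.1)).attach.map
      (fun j => t ⟨(p.1.1, j.1), mem_cells.mpr (List.mem_range.mp j.2)⟩))).getD p.1.2 (t p)

end Pleth

namespace Pleth

/-- The number of entries equal to `b` in the GL-tabloid datum `r`. -/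
noncomputable def rdCount (lam : ℕ →₀ ℕ) {B : Type*} (r : RowData lam B) (b : B) : ℕ :=
  ∑ᶠ i : ℕ, Multiset.count b (r i).1

/-- The action of the diagonal matrix with diagonal entries `z` on `Sym^lam E`, where
`E = ℂ^d`: the GL-tabloid basis vector indexed by `r` is scaled by `∏_b z_b^{(number of
entries equal to b in r)}`. -/
noncomputable def diagActL (lam : ℕ →₀ ℕ) (d : ℕ) (z : Fin d → ℂ) :
    SymMod lam (Fin d) ℂ →ₗ[ℂ] SymMod lam (Fin d) ℂ :=
  Finsupp.lsum ℂ (fun r => (∏ b : Fin d, z b ^ rdCount lam r b) • Finsupp.lsingle r)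

/-- The `β`-weight space of the representation `∇^lam (E)` of `GL_d(ℂ)`: the set of
`v ∈ ∇^lam (E)` with `g ⬝ v = g_{11}^{β 0} ⋯ g_{dd}^{β (d-1)} v` for every invertible
diagonal matrix `g`. -/
noncomputable def weightSpace (lam : ℕ →₀ ℕ) (d : ℕ) (β : Fin d → ℕ) :
    Submodule ℂ (SymMod lam (Fin d) ℂ) :=
  nabla ℂ lam (Fin d) ⊓ ⨅ z : {z : Fin d → ℂ // ∀ i, z i ≠ 0},
    LinearMap.eqLocus (diagActL lam d z.1) ((∏ i : Fin d, z.1 i ^ β i) • LinearMap.id)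

/-- The formal character `Φ_{∇^lam(E)}(x_0, …, x_{d-1}) = ∑_β dim (∇^lam(E))_β · x^β`. -/
noncomputable def formalChar (lam : ℕ →₀ ℕ) (d : ℕ) : MvPolynomial (Fin d) ℂ :=
  ∑ᶠ β : Fin d → ℕ, (Module.finrank ℂ ↥(weightSpace lam d β) : MvPolynomial (Fin d) ℂ) *
    ∏ i : Fin d, MvPolynomial.X i ^ β i

/-- The Schur polynomial `s_lam (x_0, …, x_{d-1}) = ∑_t x^t`, the sum over all semistandard
`lam`-tableaux with entries from `{0, …, d-1}`. -/
noncomputable def schurPoly (lam : ℕ →₀ ℕ) (d : ℕ) : MvPolynomial (Fin d) ℂ :=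
  ∑ t : Tab lam (Fin d),
    if IsSemistd lam t then ∏ p : Cell lam, MvPolynomial.X (t p) else 0

/-- The action of the elementary matrix `X^{(c)}` (with a single `1` in position
`(c-1, c)`) of `gl_d(K)` on `Sym^lam E`, described on the GL-tabloid basis: the entry `c`
is lowered to `c - 1` in each possible row, with multiplicity. -/
noncomputable def lowerVec (K : Type*) [CommRing K] (lam : ℕ →₀ ℕ) {d : ℕ} (c : Fin d)
    (r : RowData lam (Fin d)) : SymMod lam (Fin d) K :=
  ∑ᶠ i : ℕ, if h : c ∈ (r i).1 then
    (Multiset.count c (r i).1 : K) • Finsupp.single (Function.update r i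
      ⟨(⟨c.1 - 1, Nat.lt_of_le_of_lt (Nat.sub_le _ _) c.2⟩ : Fin d) ::ₘ (r i).1.erase c, by
        have h2 := (r i).2
        have h1 : 0 < Multiset.card (r i).1 := Multiset.card_pos_iff_exists_mem.mpr ⟨c, h⟩
        rw [Multiset.card_cons, Multiset.card_erase_of_mem h, Nat.pred_eq_sub_one]
        omega⟩) (1 : K)
  else 0

/-- The action of `X^{(c)} ∈ gl_d(K)` on `Sym^lam E`, as a linear map. -/
noncomputable def lowerL (K : Type*) [CommRing K] (lam : ℕ →₀ ℕ) {d : ℕ} (c : Fin d) :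
    SymMod lam (Fin d) K →ₗ[K] SymMod lam (Fin d) K :=
  Finsupp.lsum K (fun r => LinearMap.toSpanSingleton K _ (lowerVec K lam c r))

/-- The row-sorted tableau realizing a GL-tabloid datum `r`. -/
noncomputable def tabOf (lam : ℕ →₀ ℕ) {B : Type*} [LinearOrder B] (r : RowData lam B) :
    Tab lam B :=
  fun p => (Multiset.sort (r p.1.1).1 (· ≤ ·)).get ⟨p.1.2, by
    rw [Multiset.length_sort, (r p.1.1).2]; exact mem_cells.mp p.2⟩

/-- The action of a matrix `g` on `Sym^lam E`, `E = K^d`, described on the GL-tabloid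
basis by multilinear expansion of `g ⬝ f(t) = ⊗_i ∏_j (g v_{t(i,j)})`. -/
noncomputable def matActL (K : Type*) [CommRing K] (lam : ℕ →₀ ℕ) (d : ℕ)
    (g : Matrix (Fin d) (Fin d) K) : SymMod lam (Fin d) K →ₗ[K] SymMod lam (Fin d) K :=
  Finsupp.lsum K (fun r => LinearMap.toSpanSingleton K _
    (∑ u : Tab lam (Fin d), (∏ p : Cell lam, g (u p) (tabOf lam r p)) • tabloid K lam u))

end Pleth

namespace Pleth


/-!
Put `w = v - v(f(t^λ)) • F(t^λ)`. It lies in `∇^λ(E)`, its coefficient at `f(t^λ)` is zero, and it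
is killed by every `X^{(c)}`, because `F(t^λ)` is: by the derivation rule `X^{(c)} F(t)` is a sum of
polytabloids of tableaux with the entry `c - 1` twice in one column, and these vanish.

Suppose `w ≠ 0` and pick a tabloid `r` of its support maximising `∑_i i · (sum of the entries of
row i)`. If some row `j` had an entry `c > j` (take `j` minimal), the tabloid obtained by lowering
that `c` to `c - 1` would be reached under `X^{(c)}` from `r` alone among the support: from a lower
row by minimality of `j`, from a higher row by maximality of `r`. Its coefficient in
`X^{(c)} w = 0` would then be a nonzero multiple of `w(r)` (characteristic zero). So every entry of
`r` is at most its row index. But every tabloid in the support of an element of `∇^λ(E)` is that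
of a column-injective tableau, and a column-injective tableau with entries bounded by their row
indices is `t^λ`, whose coefficient in `w` is zero.
-/

section Tableaux

variable {lam : ℕ →₀ ℕ} {B : Type*}

variable (lam) in
def rowCells (i : ℕ) : Finset (Cell lam) := Finset.univ.filter fun p => p.1.1 = i

theorem rowData_val (t : Tab lam B) (i : ℕ) :
    (rowData lam t i).1 = (rowCells lam i).val.map t := by
  let cellAt : {j // j ∈ Finset.range (lam i)} → Cell lam :=
    fun j => ⟨(i, j.1), mem_cells.mpr (Finset.mem_range.mp j.2)⟩
  have hcells : (rowCells lam i).val = (Finset.range (lam i)).attach.val.map cellAt := by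
    refine (Multiset.Nodup.ext (rowCells lam i).nodup
      ((Finset.range (lam i)).attach.nodup.map fun j j' h => ?_)).mpr fun p => ?_
    · exact Subtype.ext (congrArg (fun p : Cell lam => p.1.2) h)
    · simp only [rowCells, Finset.mem_val, Finset.mem_filter, Finset.mem_univ, true_and,
        Multiset.mem_map]
      constructor
      · rintro rfl
        exact ⟨⟨p.1.2, Finset.mem_range.mpr (mem_cells.mp p.2)⟩, Finset.mem_attach _ _, rfl⟩
      · rintro ⟨j, -, rfl⟩
        rfl
  rw [hcells, Multiset.map_map]
  rfl

theorem mem_rowData {t : Tab lam B} {i : ℕ} {x : B} :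
    x ∈ (rowData lam t i).1 ↔ ∃ p : Cell lam, p.1.1 = i ∧ t p = x := by
  simp only [rowData_val, Multiset.mem_map, Finset.mem_val, rowCells, Finset.mem_filter,
    Finset.mem_univ, true_and]

theorem count_rowData [DecidableEq B] (t : Tab lam B) (i : ℕ) (x : B) :
    Multiset.count x (rowData lam t i).1 = ((rowCells lam i).filter (t · = x)).card := by
  rw [rowData_val, Multiset.count_map, ← Finset.filter_val, Finset.card_def]
  simp only [eq_comm]

theorem permTab_update (t : Tab lam B) (σ : Equiv.Perm (Cell lam)) (q : Cell lam) (x : B) :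
    permTab lam (Function.update t q x) σ = Function.update (permTab lam t σ) (σ q) x :=
  Function.update_comp_equiv t σ.symm q x

variable (lam) in
def ColInjective (t : Tab lam B) : Prop :=
  ∀ p q : Cell lam, p.1.2 = q.1.2 → t p = t q → p = q

theorem ColInjective.permTab {t : Tab lam B} (ht : ColInjective lam t)
    {σ : Equiv.Perm (Cell lam)} (hσ : ColPres lam σ) : ColInjective lam (permTab lam t σ) := by
  intro p q hcol hval
  have hcol' : (σ⁻¹ p).1.2 = (σ⁻¹ q).1.2 := by
    have hp := hσ (σ⁻¹ p)
    have hq := hσ (σ⁻¹ q)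
    simp only [Equiv.Perm.coe_inv, Equiv.apply_symm_apply] at hp hq
    exact hp.symm.trans (hcol.trans hq)
  exact σ⁻¹.injective (ht _ _ hcol' hval)

theorem ColInjective.val_eq_row_of_val_le_row {d : ℕ} (hlam : IsPartition lam)
    {u : Tab lam (Fin d)} (hu : ColInjective lam u) (hle : ∀ p, (u p : ℕ) ≤ p.1.1)
    (p : Cell lam) : (u p : ℕ) = p.1.1 := by
  induction hi : p.1.1 using Nat.strong_induction_on generalizing p with
  | _ i ih =>
    by_contra hne
    have hlt : (u p : ℕ) < i := lt_of_le_of_ne (hi ▸ hle p) hne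
    -- by induction, the cell in row `u p` above `p` already carries the entry `u p`
    let q : Cell lam := ⟨((u p : ℕ), p.1.2), mem_cells.mpr
      ((mem_cells.mp p.2).trans_le (hlam _ _ (hi ▸ hlt.le)))⟩
    have hqp : q = p := hu q p rfl (Fin.ext (ih _ hlt q rfl))
    exact hne (hi ▸ congrArg (fun p : Cell lam => p.1.1) hqp)

end Tableaux

section Polytabloids

variable {K : Type*} [CommRing K] {lam : ℕ →₀ ℕ} {B : Type*}

theorem polytabloid_eq_zero_of_not_colInjective {t : Tab lam B} (ht : ¬ ColInjective lam t) :
    polytabloid K lam t = 0 := by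
  obtain ⟨p, q, hcol, hval, hpq⟩ : ∃ p q : Cell lam, p.1.2 = q.1.2 ∧ t p = t q ∧ p ≠ q := by
    simpa [ColInjective] using ht
  set τ := Equiv.swap p q
  have hτ : ColPres lam τ := by
    intro y
    rcases eq_or_ne y p with rfl | hyp
    · simp [τ, hcol]
    rcases eq_or_ne y q with rfl | hyq
    · simp [τ, hcol]
    · simp [τ, Equiv.swap_apply_of_ne_of_ne hyp hyq]
  have hperm (σ : Equiv.Perm (Cell lam)) : permTab lam t (σ * τ) = permTab lam t σ := by
    funext x
    change t (τ⁻¹ (σ⁻¹ x)) = t (σ⁻¹ x)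
    rw [Equiv.swap_inv]
    rcases eq_or_ne (σ⁻¹ x) p with h | hp
    · rw [h, Equiv.swap_apply_left, hval]
    rcases eq_or_ne (σ⁻¹ x) q with h | hq
    · rw [h, Equiv.swap_apply_right, hval]
    · rw [Equiv.swap_apply_of_ne_of_ne hp hq]
  have hpres (σ : Equiv.Perm (Cell lam)) : ColPres lam (σ * τ) ↔ ColPres lam σ := by
    refine ⟨fun h y => ?_, fun h y => (h (τ y)).trans (hτ y)⟩
    simpa [τ] using (h (τ y)).trans (hτ y)
  -- right multiplication by the column transposition `τ` pairs off the terms with opposite signs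
  refine Finset.sum_involution (fun σ _ => σ * τ) (fun σ _ => ?_) (fun σ _ _ h => ?_)
    (fun σ _ => Finset.mem_univ _) (fun σ _ => by simp [τ, mul_assoc])
  · by_cases hσ : ColPres lam σ
    · simp [hσ, (hpres σ).mpr hσ, hperm, τ, Equiv.Perm.sign_swap hpq]
    · simp [hσ, (hpres σ).not.mpr hσ]
  · have hτ1 : τ = 1 := mul_eq_left.mp h
    exact hpq (by simpa [τ] using (congrArg (fun π : Equiv.Perm (Cell lam) => π p) hτ1).symm)

theorem exists_colPres_of_mem_support_polytabloid {t : Tab lam B} {r : RowData lam B}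
    (hr : r ∈ (polytabloid K lam t).support) :
    ∃ σ, ColPres lam σ ∧ rowData lam (permTab lam t σ) = r := by
  obtain ⟨σ, -, hσr⟩ := Finset.mem_biUnion.mp (Finsupp.support_finsetSum hr)
  by_cases hσ : ColPres lam σ
  · rw [if_pos hσ] at hσr
    have := Finsupp.support_single_subset (Finsupp.support_smul hσr)
    exact ⟨σ, hσ, (Finset.mem_singleton.mp this).symm⟩
  · simp [hσ] at hσr

theorem nabla_le_supported :
    nabla K lam B ≤ Finsupp.supported K K {r | ∃ u, ColInjective lam u ∧ rowData lam u = r} := by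
  refine Submodule.span_le.mpr ?_
  rintro _ ⟨t, rfl⟩
  by_cases ht : ColInjective lam t
  · intro r hr
    obtain ⟨σ, hσ, rfl⟩ := exists_colPres_of_mem_support_polytabloid hr
    exact ⟨_, ht.permTab hσ, rfl⟩
  · simp only [polytabloid_eq_zero_of_not_colInjective ht, SetLike.mem_coe, Submodule.zero_mem]

theorem polytabloid_apply_rowData_self {t : Tab lam B}
    (ht : ∀ p q : Cell lam, t p = t q → p.1.1 = q.1.1) :
    polytabloid K lam t (rowData lam t) = 1 := by
  rw [polytabloid, Finsupp.finsetSum_apply, Finset.sum_eq_single_of_mem 1 (Finset.mem_univ _)]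
  · have h1 : ColPres lam 1 := fun _ => rfl
    have ht1 : permTab lam t 1 = t := rfl
    simp [tabloid, h1, ht1]
  intro σ _ hσ1
  by_cases hσ : ColPres lam σ
  swap
  · simp [hσ]
  -- a column-preserving `σ` that only moves entries within their rows is the identity
  suffices rowData lam (permTab lam t σ) ≠ rowData lam t by
    simp [hσ, tabloid, this]
  intro hrows
  refine hσ1 (inv_eq_one.mp (Equiv.ext fun p => Subtype.ext (Prod.ext ?_ ?_)))
  · obtain ⟨q, hq, hqp⟩ := mem_rowData.mp
      (hrows ▸ mem_rowData.mpr ⟨p, rfl, rfl⟩ : t (σ⁻¹ p) ∈ (rowData lam t p.1.1).1)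
    exact (ht _ _ hqp.symm).trans hq
  · have := hσ (σ⁻¹ p)
    simp only [Equiv.Perm.coe_inv, Equiv.apply_symm_apply] at this
    exact this.symm

end Polytabloids

section Lowering

variable {K : Type*} [CommRing K] {lam : ℕ →₀ ℕ} {d : ℕ}

-- the entry `c - 1` written inline in `lowerVec`; truncated, so `predEntry 0 = 0`
def predEntry (c : Fin d) : Fin d := ⟨c.1 - 1, Nat.lt_of_le_of_lt (Nat.sub_le _ _) c.2⟩

variable (lam) in
noncomputable def lowerAt (c : Fin d) (r : RowData lam (Fin d)) (i : ℕ) (h : c ∈ (r i).1) :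
    RowData lam (Fin d) :=
  Function.update r i (⟨predEntry c ::ₘ (r i).1.erase c, by
    have hpos : 0 < Multiset.card (r i).1 := Multiset.card_pos_iff_exists_mem.mpr ⟨c, h⟩
    have hcard := (r i).2
    rw [Multiset.card_cons, Multiset.card_erase_of_mem h, Nat.pred_eq_sub_one]
    omega⟩ : Sym (Fin d) (lam i))

variable (lam) in
noncomputable def potential (r : RowData lam (Fin d)) : ℕ :=
  ∑ i ∈ lam.support, i * ((r i).1.map Fin.val).sum

theorem mem_support_of_mem_row {r : RowData lam (Fin d)} {i : ℕ} {c : Fin d}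
    (h : c ∈ (r i).1) : i ∈ lam.support := by
  rw [Finsupp.mem_support_iff, ← (r i).2]
  exact (Multiset.card_pos_iff_exists_mem.mpr ⟨c, h⟩).ne'

theorem lowerAt_apply_of_ne {c : Fin d} {r : RowData lam (Fin d)} {i k : ℕ}
    (h : c ∈ (r i).1) (hk : k ≠ i) : lowerAt lam c r i h k = r k :=
  Function.update_of_ne hk _ _

theorem lowerAt_apply_self {c : Fin d} {r : RowData lam (Fin d)} {i : ℕ} (h : c ∈ (r i).1) :
    (lowerAt lam c r i h i).1 = predEntry c ::ₘ (r i).1.erase c :=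
  congrArg Subtype.val (Function.update_self i _ r)

theorem predEntry_mem_lowerAt {c : Fin d} {r : RowData lam (Fin d)} {i : ℕ} (h : c ∈ (r i).1) :
    predEntry c ∈ (lowerAt lam c r i h i).1 := by
  rw [lowerAt_apply_self]
  exact Multiset.mem_cons_self _ _

theorem eq_of_lowerAt_eq {c : Fin d} {r r' : RowData lam (Fin d)} {i : ℕ} (h : c ∈ (r i).1)
    (h' : c ∈ (r' i).1) (heq : lowerAt lam c r i h = lowerAt lam c r' i h') : r = r' := by
  funext k
  rcases eq_or_ne k i with rfl | hk
  · have hrow := congrArg Subtype.val (congrFun heq k)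
    rw [lowerAt_apply_self, lowerAt_apply_self, Multiset.cons_inj_right] at hrow
    exact Subtype.ext (by rw [← Multiset.cons_erase h, hrow, Multiset.cons_erase h'])
  · simpa [lowerAt_apply_of_ne _ hk] using congrFun heq k

theorem potential_lowerAt {c : Fin d} (hc : 1 ≤ (c : ℕ)) {r : RowData lam (Fin d)} {i : ℕ}
    (h : c ∈ (r i).1) : potential lam (lowerAt lam c r i h) + i = potential lam r := by
  have hi := mem_support_of_mem_row h
  rw [potential, potential, ← Finset.add_sum_erase _ _ hi, ← Finset.add_sum_erase _ _ hi,
    Finset.sum_congr rfl fun k hk => by rw [lowerAt_apply_of_ne h (Finset.ne_of_mem_erase hk)]]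
  conv_rhs => rw [← Multiset.cons_erase h]
  rw [lowerAt_apply_self, Multiset.map_cons, Multiset.sum_cons, Multiset.map_cons,
    Multiset.sum_cons]
  obtain ⟨m, hm⟩ : ∃ m, (c : ℕ) = m + 1 := ⟨c - 1, by omega⟩
  rw [show ((predEntry c : Fin d) : ℕ) = c - 1 from rfl, hm, Nat.add_sub_cancel]
  ring

theorem row_eq_of_lowerAt_eq {c : Fin d} (hc : 1 ≤ (c : ℕ)) {r : RowData lam (Fin d)} {i j : ℕ}
    (hi : c ∈ (r i).1) (hj : c ∈ (r j).1) (heq : lowerAt lam c r i hi = lowerAt lam c r j hj) :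
    i = j := by
  have := potential_lowerAt hc hi
  rw [heq, ← potential_lowerAt hc hj] at this
  omega

theorem lowerVec_eq_sum (c : Fin d) (r : RowData lam (Fin d)) :
    lowerVec K lam c r = ∑ i ∈ lam.support, if h : c ∈ (r i).1 then
      (Multiset.count c (r i).1 : K) • Finsupp.single (lowerAt lam c r i h) (1 : K) else 0 := by
  refine finsum_eq_sum_of_support_subset _ fun i hi => ?_
  by_contra hnot
  refine hi (dif_neg fun h => hnot ?_)
  exact mem_support_of_mem_row h

theorem lowerVec_apply_lowerAt {c : Fin d} (hc : 1 ≤ (c : ℕ)) {r : RowData lam (Fin d)} {j : ℕ}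
    (h : c ∈ (r j).1) : lowerVec K lam c r (lowerAt lam c r j h) = Multiset.count c (r j).1 := by
  rw [lowerVec_eq_sum, Finsupp.finsetSum_apply,
    Finset.sum_eq_single_of_mem j (mem_support_of_mem_row h) fun i _ hij => ?_]
  · rw [dif_pos h, Finsupp.smul_apply, Finsupp.single_eq_same, smul_eq_mul, mul_one]
  · by_cases hi : c ∈ (r i).1
    · rw [dif_pos hi, Finsupp.smul_apply,
        Finsupp.single_eq_of_ne fun heq => hij (row_eq_of_lowerAt_eq hc hi h heq.symm), smul_zero]
    · rw [dif_neg hi, Finsupp.coe_zero, Pi.zero_apply]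

theorem exists_lowerAt_eq_of_lowerVec_apply_ne_zero {c : Fin d} {r s : RowData lam (Fin d)}
    (hs : lowerVec K lam c r s ≠ 0) : ∃ i h, lowerAt lam c r i h = s := by
  rw [lowerVec_eq_sum, Finsupp.finsetSum_apply] at hs
  obtain ⟨i, -, hi⟩ := Finset.exists_ne_zero_of_sum_ne_zero hs
  by_cases h : c ∈ (r i).1
  · refine ⟨i, h, by_contra fun hne => hi ?_⟩
    rw [dif_pos h, Finsupp.smul_apply, Finsupp.single_eq_of_ne (Ne.symm hne), smul_zero]
  · rw [dif_neg h] at hi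
    exact absurd rfl hi

theorem lowerL_single (c : Fin d) (r : RowData lam (Fin d)) :
    lowerL K lam c (Finsupp.single r 1) = lowerVec K lam c r := by
  simp [lowerL]

end Lowering

theorem _root_.Finsupp.exists_ne_mem_support_of_map_eq_zero {α β R : Type*} [Semiring R]
    [NoZeroDivisors R] (L : (α →₀ R) →ₗ[R] β →₀ R) {v : α →₀ R} (hv : L v = 0) {a : α}
    (ha : a ∈ v.support) {b : β} (hb : L (Finsupp.single a 1) b ≠ 0) :
    ∃ a' ∈ v.support, a' ≠ a ∧ L (Finsupp.single a' 1) b ≠ 0 := by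
  by_contra! h
  have hLv : L v b = v a * L (Finsupp.single a 1) b := by
    conv_lhs => rw [← Finsupp.sum_single v]
    rw [map_finsuppSum, Finsupp.sum, Finsupp.finsetSum_apply,
      Finset.sum_eq_single_of_mem a ha fun a' ha' hne => ?_]
    · rw [← Finsupp.smul_single_one, map_smul, Finsupp.smul_apply, smul_eq_mul]
    · rw [← Finsupp.smul_single_one, map_smul, Finsupp.smul_apply, h a' ha' hne, smul_zero]
  exact mul_ne_zero (Finsupp.mem_support_iff.mp ha) hb (hLv ▸ hv ▸ rfl)

theorem exists_mem_support_forall_le_row {K : Type*} [CommRing K] [NoZeroDivisors K] [CharZero K]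
    {lam : ℕ →₀ ℕ} {d : ℕ} {v : SymMod lam (Fin d) K} (hv0 : v ≠ 0)
    (hkill : ∀ c : Fin d, 1 ≤ (c : ℕ) → lowerL K lam c v = 0) :
    ∃ r ∈ v.support, ∀ i, ∀ x ∈ (r i).1, (x : ℕ) ≤ i := by
  obtain ⟨r, hr, hmax⟩ := Finset.exists_max_image v.support (potential lam)
    (Finsupp.support_nonempty_iff.mpr hv0)
  refine ⟨r, hr, ?_⟩
  by_contra! hbad
  obtain ⟨c, hc, hjc⟩ := Nat.find_spec hbad
  set j := Nat.find hbad
  have hc1 : 1 ≤ (c : ℕ) := by omega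
  have hcoeff : lowerL K lam c (Finsupp.single r 1) (lowerAt lam c r j hc) ≠ 0 := by
    rw [lowerL_single, lowerVec_apply_lowerAt hc1]
    exact Nat.cast_ne_zero.mpr (Multiset.count_ne_zero.mpr hc)
  obtain ⟨r', hr', hne, hr'coeff⟩ :=
    Finsupp.exists_ne_mem_support_of_map_eq_zero _ (hkill c hc1) hr hcoeff
  rw [lowerL_single] at hr'coeff
  obtain ⟨i, hi, heq⟩ := exists_lowerAt_eq_of_lowerVec_apply_ne_zero hr'coeff
  rcases lt_trichotomy i j with hij | rfl | hji
  · have hrow : lowerAt lam c r' i hi i = r i := heq ▸ lowerAt_apply_of_ne hc hij.ne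
    refine Nat.find_min hbad hij ⟨_, hrow ▸ predEntry_mem_lowerAt hi, ?_⟩
    change i < (c : ℕ) - 1
    omega
  · exact hne (eq_of_lowerAt_eq hi hc heq)
  · have h1 := potential_lowerAt hc1 hi
    have h2 := potential_lowerAt hc1 hc
    rw [heq] at h1
    have := hmax r' hr'
    omega

section Derivation

variable {K : Type*} [CommRing K] {lam : ℕ →₀ ℕ} {d : ℕ}

theorem rowData_update_predEntry {u : Tab lam (Fin d)} {q : Cell lam} {c : Fin d} (hq : u q = c)
    {i : ℕ} (hi : q.1.1 = i) (h : c ∈ (rowData lam u i).1) :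
    rowData lam (Function.update u q (predEntry c)) = lowerAt lam c (rowData lam u) i h := by
  funext k
  apply Subtype.ext
  rcases eq_or_ne k i with rfl | hk
  · rw [lowerAt_apply_self, rowData_val, rowData_val]
    have hqS : q ∈ (rowCells lam k).val :=
      Finset.mem_val.mpr (Finset.mem_filter.mpr ⟨Finset.mem_univ _, hi⟩)
    rw [← Multiset.cons_erase hqS, Multiset.map_cons, Multiset.map_cons, hq,
      Multiset.erase_cons_head, Function.update_self]
    congr 1
    refine Multiset.map_congr rfl fun p hp => Function.update_of_ne ?_ _ _
    exact ((rowCells lam k).nodup.mem_erase_iff.mp hp).1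
  · rw [lowerAt_apply_of_ne h hk, rowData_val, rowData_val]
    refine Multiset.map_congr rfl fun p hp => Function.update_of_ne (fun hpq => hk ?_) _ _
    have hrow := (Finset.mem_filter.mp (Finset.mem_val.mp hp)).2
    rw [hpq] at hrow
    exact hrow.symm.trans hi

theorem lowerVec_rowData (c : Fin d) (u : Tab lam (Fin d)) :
    lowerVec K lam c (rowData lam u) = ∑ q ∈ Finset.univ.filter (u · = c),
      Finsupp.single (rowData lam (Function.update u q (predEntry c))) (1 : K) := by
  rw [lowerVec_eq_sum, ← Finset.sum_fiberwise_of_maps_to (t := lam.support)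
    (g := fun q : Cell lam => q.1.1)
    fun q _ => Finsupp.mem_support_iff.mpr (by have := mem_cells.mp q.2; omega)]
  refine Finset.sum_congr rfl fun i _ => ?_
  by_cases h : c ∈ (rowData lam u i).1
  · rw [dif_pos h, Finset.sum_congr rfl fun q hq => by
      rw [rowData_update_predEntry (Finset.mem_filter.mp (Finset.mem_filter.mp hq).1).2
        (Finset.mem_filter.mp hq).2 h], Finset.sum_const, ← Nat.cast_smul_eq_nsmul K]
    rw [count_rowData, rowCells, Finset.filter_filter, Finset.filter_filter]
    simp only [and_comm]
  · rw [dif_neg h, Finset.sum_eq_zero fun q hq => absurd (mem_rowData.mpr ⟨q, ?_⟩) h]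
    simp only [Finset.mem_filter] at hq
    exact ⟨hq.2, hq.1.2⟩

theorem lowerL_polytabloid (c : Fin d) (t : Tab lam (Fin d)) :
    lowerL K lam c (polytabloid K lam t) = ∑ q ∈ Finset.univ.filter (t · = c),
      polytabloid K lam (Function.update t q (predEntry c)) := by
  simp only [polytabloid, map_sum]
  rw [Finset.sum_comm]
  refine Finset.sum_congr rfl fun σ _ => ?_
  by_cases hσ : ColPres lam σ
  · simp only [if_pos hσ, map_zsmul, tabloid, lowerL_single, lowerVec_rowData, ← Finset.smul_sum]
    congr 1
    refine Finset.sum_equiv σ⁻¹ (fun q => ?_) fun q _ => ?_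
    · simp only [Finset.mem_filter, Finset.mem_univ, true_and]
      rfl
    · rw [permTab_update]
      simp only [Equiv.Perm.coe_inv, Equiv.apply_symm_apply]
  · simp [hσ]

theorem lowerL_polytabloid_eq_zero (hlam : IsPartition lam) {t : Tab lam (Fin d)}
    (ht : ∀ p, (t p : ℕ) = p.1.1) {c : Fin d} (hc : 1 ≤ (c : ℕ)) :
    lowerL K lam c (polytabloid K lam t) = 0 := by
  rw [lowerL_polytabloid]
  refine Finset.sum_eq_zero fun q hq => polytabloid_eq_zero_of_not_colInjective fun hinj => ?_
  have hqc : q.1.1 = c := by rw [← ht q, (Finset.mem_filter.mp hq).2]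
  -- the cell above `q` already holds the entry `c - 1` that `q` receives
  let p : Cell lam := ⟨((c : ℕ) - 1, q.1.2),
    mem_cells.mpr ((mem_cells.mp q.2).trans_le (hlam _ _ (by omega)))⟩
  have hpq : p ≠ q := fun h => by
    have := congrArg (fun p : Cell lam => p.1.1) h
    simp only [p] at this
    omega
  refine hpq (hinj p q rfl ?_)
  rw [Function.update_of_ne hpq, Function.update_self]
  exact Fin.ext (ht p)

end Derivation

theorem highest_weight_unique_general (K : Type*) [Field K] [CharZero K] (d : ℕ)
    (lam : ℕ →₀ ℕ) (hlam : IsPartition lam)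
    (tlam : Tab lam (Fin d)) (htlam : ∀ p : Cell lam, ((tlam p : Fin d) : ℕ) = p.1.1)
    (v : SymMod lam (Fin d) K) (hv : v ∈ nabla K lam (Fin d))
    (hkill : ∀ c : Fin d, 1 ≤ (c : ℕ) → lowerL K lam c v = 0) :
    ∃ k : K, v = k • polytabloid K lam tlam := by
  refine ⟨v (rowData lam tlam), sub_eq_zero.mp ?_⟩
  set w := v - v (rowData lam tlam) • polytabloid K lam tlam
  have hw : w ∈ nabla K lam (Fin d) :=
    sub_mem hv (Submodule.smul_mem _ _ (Submodule.subset_span ⟨tlam, rfl⟩))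
  have hwkill (c : Fin d) (hc : 1 ≤ (c : ℕ)) : lowerL K lam c w = 0 := by
    simp [w, hkill c hc, lowerL_polytabloid_eq_zero hlam htlam hc]
  have hw_lead : w (rowData lam tlam) = 0 := by
    have hrows : ∀ p q, tlam p = tlam q → p.1.1 = q.1.1 := fun p q h => by
      rw [← htlam p, ← htlam q, h]
    simp [w, polytabloid_apply_rowData_self hrows]
  by_contra hw0
  obtain ⟨r, hr, hrow⟩ := exists_mem_support_forall_le_row hw0 hwkill
  obtain ⟨u, hu, rfl⟩ := (Finsupp.mem_supported K w).mp (nabla_le_supported hw) hr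
  have hut : u = tlam := funext fun p => Fin.ext <|
    (hu.val_eq_row_of_val_le_row hlam (fun p => hrow _ _ (mem_rowData.mpr ⟨p, rfl, rfl⟩)) p).trans
      (htlam p).symm
  exact Finsupp.mem_support_iff.mp hr (hut ▸ hw_lead)

/-- **Proposition (uniqueness of the highest-weight vector in `∇^lam (E)`).**
Let `K` be a field of characteristic zero, `E = K^d`, and let `lam` be a partition with at
most `d` parts.  If `v ∈ ∇^lam (E)` satisfies `X^{(c)} ⬝ v = 0` for every
strictly-upper-triangular elementary matrix `X^{(c)}` (here `c : Fin d` with `c ≥ 1`,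
lowering the entry `c` to `c - 1`), then `v` is a scalar multiple of `F(t^lam)`, where
`t^lam` is the `lam`-tableau with every entry of row `i` equal to `i`. -/
theorem highest_weight_unique (K : Type*) [Field K] [CharZero K] (d : ℕ)
    (lam : ℕ →₀ ℕ) (hlam : IsPartition lam) (hlen : ∀ i : ℕ, d ≤ i → lam i = 0)
    (tlam : Tab lam (Fin d)) (htlam : ∀ p : Cell lam, ((tlam p : Fin d) : ℕ) = p.1.1)
    (v : SymMod lam (Fin d) K) (hv : v ∈ nabla K lam (Fin d))
    (hkill : ∀ c : Fin d, 1 ≤ (c : ℕ) → lowerL K lam c v = 0) :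
    ∃ k : K, v = k • polytabloid K lam tlam :=
  highest_weight_unique_general K d lam hlam tlam htlam v hv hkill

end Pleth
end

section
/- Let μ be a partition of m, ν a partition of n, λ a partition of mn, r ∈ ℕ and M ∈ ℕ. Set e = 1 if r ≥ ℓ(μ) and e = μ_{r+1} + 1 otherwise. If M > n(μ_1 + ⋯ + μ_{r−1}) + (n−1)μ_r + μ_{r+1} − (λ_1 + ⋯ + λ_r), then every semistandard ν-tableau U whose entries are semistandard (μ + M(1^r))-tableaux with entries from {1,…,d} and whose weight is λ + M(n^r) is r-saturated: every tableau entry u of U satisfies u(i,j) = i for all 1 ≤ i ≤ r and 1 ≤ j ≤ e. -/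
open scoped Classical

/-!
Write `κ = μ + M(1^r)`. In a semistandard `κ`-tableau the entry in row `i` is at least `i`, so
every entry `≤ r` lies in the top `r` rows; call the entries `> r` of those rows displaced. The
weight `λ + M(n^r)` fixes how many entries of `U` are `≤ r`, so `U` has exactly
`n(μ_1 + ⋯ + μ_r) - (λ_1 + ⋯ + λ_r)` displaced entries in total. If `u(i, j) ≠ i` for some
entry `u`, row `i ≤ r` and column `j ≤ e`, then `u(i, j) > i`; going down column `j` to row `r`
and then right along row `r`, every cell is displaced, so `u` alone has at least
`μ_r + M - μ_{r+1}` displaced entries, which the bound on `M` forbids.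
-/

namespace Pleth

lemma rect_apply (r v i : ℕ) : rect r v i = if i < r then v else 0 := by
  simp [rect, Finsupp.finsetSum_apply, Finsupp.single_apply]

lemma sum_range_add_rect (f : ℕ →₀ ℕ) (r v : ℕ) :
    ∑ i ∈ Finset.range r, (f + rect r v) i = ∑ i ∈ Finset.range r, f i + r * v := by
  rw [Finset.sum_congr rfl fun i hi => by
    rw [Finsupp.add_apply, rect_apply, if_pos (Finset.mem_range.mp hi)]]
  simp [Finset.sum_add_distrib]

lemma IsPartition.add_rect {mu : ℕ →₀ ℕ} (hmu : IsPartition mu) (r v : ℕ) :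
    IsPartition (mu + rect r v) := by
  intro i j hij
  simp only [Finsupp.add_apply, rect_apply]
  have := hmu i j hij
  split_ifs <;> omega

lemma IsPartition.mem_cells_of_le {kap : ℕ →₀ ℕ} (hk : IsPartition kap) {p q : ℕ × ℕ}
    (hq : q ∈ cells kap) (h1 : p.1 ≤ q.1) (h2 : p.2 ≤ q.2) : p ∈ cells kap :=
  mem_cells.mpr (by have := hk p.1 q.1 h1; have := mem_cells.mp hq; omega)

lemma card_filter_cells_fst_mem (lam : ℕ →₀ ℕ) (s : Finset ℕ) :
    ((cells lam).filter (·.1 ∈ s)).card = ∑ i ∈ s, lam i := by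
  rw [show ∑ i ∈ s, lam i = ∑ i ∈ s, (Finset.range (lam i)).card by simp, ← Finset.card_sigma]
  refine Finset.card_nbij' (fun p => ⟨p.1, p.2⟩) (fun q => (q.1, q.2)) ?_ ?_ ?_ ?_ <;>
    intro x hx <;> simp_all [mem_cells]

lemma card_filter_cell_row_lt (lam : ℕ →₀ ℕ) (r : ℕ) :
    (Finset.univ.filter fun q : Cell lam => q.1.1 < r).card = ∑ i ∈ Finset.range r, lam i := by
  rw [← card_filter_cells_fst_mem, ← Finset.card_map (Function.Embedding.subtype _)]
  congr 1
  ext x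
  simp [and_comm]

lemma card_cell (lam : ℕ →₀ ℕ) : Fintype.card (Cell lam) = lam.sum fun _ k => k := by
  rw [Fintype.card_coe, Finsupp.sum, ← card_filter_cells_fst_mem, Finset.filter_true_of_mem]
  intro p hp
  exact Finsupp.mem_support_iff.mpr (Nat.ne_zero_of_lt (mem_cells.mp hp))

lemma sum_filter_fin_val_lt {β : Type*} [AddCommMonoid β] (f : ℕ → β) {r d : ℕ} (h : r ≤ d) :
    ∑ b ∈ Finset.univ.filter (fun b : Fin d => (b : ℕ) < r), f b = ∑ i ∈ Finset.range r, f i := by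
  rw [Finset.sum_filter, Fin.sum_univ_eq_sum_range (fun i => if i < r then f i else 0),
    ← Finset.sum_filter]
  congr 1
  ext i
  simp only [Finset.mem_filter, Finset.mem_range]
  omega

section Semistandard

variable {kap : ℕ →₀ ℕ} {d : ℕ} {u : Tab kap (Fin d)}

lemma IsSemistd.add_le_of_col_eq (hk : IsPartition kap) (hu : IsSemistd kap u) :
    ∀ (k : ℕ) (p q : Cell kap), p.1.2 = q.1.2 → q.1.1 = p.1.1 + k → (u p : ℕ) + k ≤ u q
  | 0, p, q, hcol, hrow => by
    rw [show p = q from Subtype.ext (Prod.ext hrow.symm hcol)]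
    simp
  | k + 1, p, q, hcol, hrow => by
    let q' : Cell kap := ⟨(p.1.1 + k, q.1.2), hk.mem_cells_of_le q.2 (by simp; omega) le_rfl⟩
    have hpq' := hu.add_le_of_col_eq hk k p q' hcol rfl
    have hq'q : u q' < u q := hu.2 q' q rfl (by simp [q']; omega)
    rw [Fin.lt_def] at hq'q
    omega

lemma IsSemistd.add_row_sub_le (hk : IsPartition kap) (hu : IsSemistd kap u) (p q : Cell kap)
    (hrow : p.1.1 ≤ q.1.1) (hcol : p.1.2 ≤ q.1.2) : (u p : ℕ) + (q.1.1 - p.1.1) ≤ u q := by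
  let q' : Cell kap := ⟨(q.1.1, p.1.2), hk.mem_cells_of_le q.2 le_rfl hcol⟩
  have hpq' := hu.add_le_of_col_eq hk (q.1.1 - p.1.1) p q' rfl (by simp [q']; omega)
  have hq'q : u q' ≤ u q := hu.1 q' q rfl hcol
  rw [Fin.le_def] at hq'q
  omega

lemma IsSemistd.row_le (hk : IsPartition kap) (hu : IsSemistd kap u) (p : Cell kap) :
    p.1.1 ≤ u p := by
  have := hu.add_row_sub_le hk ⟨(0, 0), hk.mem_cells_of_le p.2 (Nat.zero_le _) (Nat.zero_le _)⟩ p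
    (Nat.zero_le _) (Nat.zero_le _)
  simp only [Nat.sub_zero] at this
  omega

end Semistandard

section Counting

variable {kap : ℕ →₀ ℕ} {d : ℕ}

def countBelow (u : Tab kap (Fin d)) (r : ℕ) : ℕ :=
  (Finset.univ.filter fun q : Cell kap => (u q : ℕ) < r).card

def countDisplaced (u : Tab kap (Fin d)) (r : ℕ) : ℕ :=
  (Finset.univ.filter fun q : Cell kap => q.1.1 < r ∧ r ≤ (u q : ℕ)).card

variable {u : Tab kap (Fin d)}

lemma IsSemistd.countBelow_add_countDisplaced (hk : IsPartition kap) (hu : IsSemistd kap u)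
    (r : ℕ) : countBelow u r + countDisplaced u r = ∑ i ∈ Finset.range r, kap i := by
  have hbelow : countBelow u r =
      (Finset.univ.filter fun q : Cell kap => q.1.1 < r ∧ (u q : ℕ) < r).card := by
    refine congrArg _ (Finset.filter_congr fun q _ => ?_)
    have := hu.row_le hk q
    constructor <;> intro h <;> omega
  have hdisp : countDisplaced u r =
      (Finset.univ.filter fun q : Cell kap => q.1.1 < r ∧ ¬ (u q : ℕ) < r).card := by
    simp only [countDisplaced, not_lt]
  rw [hbelow, hdisp, ← Finset.filter_filter, ← Finset.filter_filter,
    Finset.card_filter_add_card_filter_not, card_filter_cell_row_lt]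

lemma IsSemistd.sub_le_countDisplaced (hk : IsPartition kap) (hu : IsSemistd kap u) {r : ℕ}
    (p : Cell kap) (hrow : p.1.1 < r) (hp : p.1.1 < u p) :
    kap (r - 1) - p.1.2 ≤ countDisplaced u r := by
  rw [← Nat.card_Ico, countDisplaced, ← Finset.card_map (Function.Embedding.subtype _)]
  refine Finset.card_le_card_of_injOn (fun j => (r - 1, j)) (fun j hj => ?_)
    (fun _ _ _ _ h => (Prod.mk.inj h).2)
  rw [Finset.coe_Ico, Set.mem_Ico] at hj
  have hq : (r - 1, j) ∈ cells kap := mem_cells.mpr hj.2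
  have := hu.add_row_sub_le hk p ⟨_, hq⟩ (by simp; omega) hj.1
  simp only [Finset.coe_map, Function.Embedding.coe_subtype, Set.mem_image, Finset.mem_coe,
    Finset.mem_filter, Finset.mem_univ, true_and]
  exact ⟨⟨_, hq⟩, ⟨by simp; omega, by simp at this ⊢; omega⟩, rfl⟩

lemma lt_of_countDisplaced_pos {r : ℕ} (h : 0 < countDisplaced u r) : r < d := by
  obtain ⟨q, hq⟩ := Finset.card_pos.mp h
  exact ((Finset.mem_filter.mp hq).2.2).trans_lt (u q).2

end Counting

lemma sum_countBelow {mu nu : ℕ →₀ ℕ} {d : ℕ} {T : Tab nu (SSYT mu (Fin d))}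
    {α : Fin d → ℕ} (hT : HasWeight mu nu T α) (r : ℕ) :
    ∑ P, countBelow (T P).1 r = ∑ b ∈ Finset.univ.filter (fun b : Fin d => (b : ℕ) < r), α b := by
  rw [Finset.sum_congr rfl fun b _ => hT b, Finset.sum_comm]
  refine Finset.sum_congr rfl fun P _ => ?_
  rw [countBelow, Finset.card_eq_sum_card_fiberwise (f := (T P).1)
    (t := Finset.univ.filter fun b : Fin d => (b : ℕ) < r) (fun q hq => by simpa using hq)]
  refine Finset.sum_congr rfl fun b hb => ?_
  rw [Finset.filter_filter]
  refine congrArg _ (Finset.filter_congr fun q _ => ?_)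
  simp only [Finset.mem_filter, Finset.mem_univ, true_and] at hb
  exact ⟨fun h => h.2, fun h => ⟨h ▸ hb, h⟩⟩

/-- Rows and columns are `0`-indexed: the paper's columns `1 ≤ j ≤ e` are the columns
`j ≤ mu r` here (`mu r = 0` when `r ≥ ℓ(μ)`). -/
theorem saturated_of_large_general (d m n r M : ℕ) (hM : 0 < M) (mu nu lam : ℕ →₀ ℕ)
    (hmu : IsPartitionOf mu m) (hnu : IsPartitionOf nu n)
    (hbound : (n : ℤ) * ∑ i ∈ Finset.range (r - 1), (mu i : ℤ)
        + (n - 1) * (mu (r - 1) : ℤ) + (mu r : ℤ)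
        - ∑ i ∈ Finset.range r, (lam i : ℤ) < (M : ℤ))
    (U : Tab nu (SSYT (mu + rect r M) (Fin d)))
    (hwt : HasWeight (mu + rect r M) nu U (fun b : Fin d => (lam + rect r (M * n)) b.1)) :
    ∀ (P : Cell nu) (p : Cell (mu + rect r M)),
      p.1.1 < r → p.1.2 ≤ mu r → (((U P).1 p : Fin d) : ℕ) = p.1.1 := by
  intro P p hrow hcol
  by_contra hne
  have hκ := hmu.1.add_rect r M
  have hdisp := (U P).2.sub_le_countDisplaced hκ p hrow
    (lt_of_le_of_ne ((U P).2.row_le hκ p) (Ne.symm hne))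
  have hκr : (mu + rect r M) (r - 1) = mu (r - 1) + M := by
    simp only [Finsupp.add_apply, rect_apply, if_pos (Nat.sub_lt_self one_pos (by omega : 1 ≤ r))]
  have hmono : mu r ≤ mu (r - 1) := hmu.1 _ _ (Nat.sub_le r 1)
  have hP : mu (r - 1) + M ≤ countDisplaced (U P).1 r + mu r := by omega
  have hrd : r ≤ d := (lt_of_countDisplaced_pos (u := (U P).1) (by omega)).le
  have htotal : ∑ Q, countBelow (U Q).1 r + ∑ Q, countDisplaced (U Q).1 r
      = n * (∑ i ∈ Finset.range (r - 1), mu i + mu (r - 1) + r * M) := by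
    rw [← Finset.sum_add_distrib, Finset.sum_congr rfl fun Q _ =>
      (U Q).2.countBelow_add_countDisplaced hκ r, Finset.sum_const, Finset.card_univ, card_cell,
      hnu.2, sum_range_add_rect, smul_eq_mul, ← Finset.sum_range_succ, Nat.sub_add_cancel (by omega)]
  have hbelow : ∑ Q, countBelow (U Q).1 r = ∑ i ∈ Finset.range r, lam i + r * (M * n) := by
    rw [sum_countBelow hwt, sum_filter_fin_val_lt (fun i => (lam + rect r (M * n)) i) hrd,
      sum_range_add_rect]
  have hsingle : countDisplaced (U P).1 r ≤ ∑ Q, countDisplaced (U Q).1 r :=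
    Finset.single_le_sum (f := fun Q => countDisplaced (U Q).1 r) (fun _ _ => Nat.zero_le _)
      (Finset.mem_univ P)
  zify at htotal hbelow hsingle hP
  linarith

/-- **Lemma (saturation).**
Let `μ ⊢ m`, `ν ⊢ n`, `λ ⊢ mn`, `r ∈ ℕ` and `M ∈ ℕ`.  With `0`-indexed columns, the columns
`1 ≤ j ≤ e` of the paper (where `e = 1` if `r ≥ ℓ(μ)` and `e = μ_{r+1} + 1` otherwise)
are exactly the columns `j ≤ μ r` (`0`-indexed; note `μ r = 0` when `r ≥ ℓ(μ)`).
If `M > n(μ_1 + ⋯ + μ_{r-1}) + (n-1)μ_r + μ_{r+1} - (λ_1 + ⋯ + λ_r)`, then every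
semistandard `ν`-tableau `U` whose entries are semistandard `(μ + M(1^r))`-tableaux with
entries from `{0, …, d-1}` and whose weight is `λ + M(n^r)` is `r`-saturated:  every tableau
entry `u` of `U` satisfies `u (i, j) = i` for all rows `i < r` and columns `j ≤ μ r`. -/
theorem saturated_of_large (d m n r M : ℕ) (hm : 0 < m) (hn : 0 < n) (hr : 0 < r)
    (hM : 0 < M) (mu nu lam : ℕ →₀ ℕ)
    (hmu : IsPartitionOf mu m) (hnu : IsPartitionOf nu n) (hlam : IsPartitionOf lam (m * n))
    (hbound : (n : ℤ) * ∑ i ∈ Finset.range (r - 1), (mu i : ℤ)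
        + (n - 1) * (mu (r - 1) : ℤ) + (mu r : ℤ)
        - ∑ i ∈ Finset.range r, (lam i : ℤ) < (M : ℤ))
    (U : Tab nu (SSYT (mu + rect r M) (Fin d)))
    (hU : IsPSSYT (mu + rect r M) nu U)
    (hwt : HasWeight (mu + rect r M) nu U (fun b : Fin d => (lam + rect r (M * n)) b.1))
    (hwt' : ∀ i : ℕ, d ≤ i → (lam + rect r (M * n)) i = 0) :
    ∀ (P : Cell nu) (p : Cell (mu + rect r M)),
      p.1.1 < r → p.1.2 ≤ mu r → (((U P).1 p : Fin d) : ℕ) = p.1.1 :=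
  saturated_of_large_general d m n r M hM mu nu lam hmu hnu hbound U hwt

end Pleth
end
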